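/- arXiv:2211.01209 — 2 statements merged into one kernel-verified Lean document; each statement's English description precedes it below -/
import Mathlib

section
/- Let t, k, v, λ be positive integers with k ≥ t ≥ 2 and v ≥ 2 such that p = 1/v^t ≤ 1/4, and let a = sqrt(((1-p)^{2λ} - p^{2λ})/(1-2p)). Then the real number x = log(1-p) / (e · (C(k,t) · v^t · a · (1-p))^{1/λ}) satisfies -1/e < x < 0. -/
/-! With `q = 1 - p` we have `1 - 2p = q - p`, so `a²` is the geometric sum
`∑ q^{2λ-1-i} p^i ≥ q^{2λ-1} ≥ q^{2λ}` and `a ≥ q^λ`. Since `v^t = 1/p` and `q/p ≥ 3`, the base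
`C(k,t) v^t a q` exceeds `q^λ`, hence its `λ`-th root `y` exceeds `q ≥ 3/4`. On the other hand
`-log q ≤ p/q ≤ 1/3`, so `log q + y > 0`, which is `x > -1/e`. -/

open Real

lemma pow_sub_pow_ge_mul_sub {p q : ℝ} (hp : 0 ≤ p) (hpq : p ≤ q) {n : ℕ} (hn : n ≠ 0) :
    q ^ (n - 1) * (q - p) ≤ q ^ n - p ^ n := by
  obtain ⟨m, rfl⟩ := Nat.exists_eq_succ_of_ne_zero hn
  have : p ^ m ≤ q ^ m := pow_le_pow_left₀ hp hpq m
  simp only [Nat.succ_sub_one, pow_succ]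
  nlinarith

lemma pow_le_sqrt_pow_sub_pow_div {p q : ℝ} (hp : 0 ≤ p) (hpq : p < q) (hq : q ≤ 1) {n : ℕ}
    (hn : n ≠ 0) : q ^ n ≤ √((q ^ (2 * n) - p ^ (2 * n)) / (q - p)) := by
  have hq0 : 0 < q := hp.trans_lt hpq
  rw [le_sqrt' (by positivity), ← pow_mul, mul_comm, le_div_iff₀ (sub_pos.2 hpq)]
  calc q ^ (2 * n) * (q - p) ≤ q ^ (2 * n - 1) * (q - p) :=
        mul_le_mul_of_nonneg_right (pow_le_pow_of_le_one hq0.le hq (Nat.sub_le _ _))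
          (sub_nonneg.2 hpq.le)
    _ ≤ q ^ (2 * n) - p ^ (2 * n) := pow_sub_pow_ge_mul_sub hp hpq.le (by omega)

lemma neg_third_le_log_one_sub {p : ℝ} (hp : p ≤ 1 / 4) : -(1 / 3) ≤ log (1 - p) := by
  have hq : 0 < 1 - p := by linarith
  have hinv : (1 - p)⁻¹ ≤ 4 / 3 := by
    rw [inv_le_comm₀ hq (by norm_num)]
    linarith
  calc -(1 / 3) ≤ 1 - (1 - p)⁻¹ := by linarith
    _ ≤ log (1 - p) := one_sub_inv_le_log_of_pos hq

lemma lt_rpow_one_div_of_pow_lt {c B : ℝ} (hc : 0 ≤ c) {n : ℕ} (hn : n ≠ 0) (h : c ^ n < B) :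
    c < B ^ ((1 : ℝ) / n) := by
  rw [one_div]
  calc c = (c ^ n) ^ ((n : ℝ)⁻¹) := (pow_rpow_inv_natCast hc hn).symm
    _ < B ^ ((n : ℝ)⁻¹) := rpow_lt_rpow (by positivity) h (by positivity)

lemma neg_inv_exp_lt_div_exp_mul {L y : ℝ} (hL : L < 0) (hLy : 0 < L + y) :
    -1 / exp 1 < L / (exp 1 * y) ∧ L / (exp 1 * y) < 0 := by
  have he := exp_pos 1
  have hey : 0 < exp 1 * y := mul_pos he (by linarith)
  refine ⟨?_, div_neg_of_neg_of_pos hL hey⟩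
  rw [div_lt_div_iff₀ he hey]
  nlinarith [mul_pos he hLy]

theorem w_arg_is_small_enough_general (t k v lam : ℕ) (p a x : ℝ)
    (hk : t ≤ k) (hv : 2 ≤ v) (hlam : 1 ≤ lam)
    (hp : p = 1 / (v : ℝ) ^ t) (hp4 : p ≤ 1 / 4)
    (ha : a = Real.sqrt (((1 - p) ^ (2 * lam) - p ^ (2 * lam)) / (1 - 2 * p)))
    (hx : x = Real.log (1 - p) /
      (Real.exp 1 * ((k.choose t : ℝ) * (v : ℝ) ^ t * a * (1 - p)) ^ ((1 : ℝ) / lam))) :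
    -1 / Real.exp 1 < x ∧ x < 0 := by
  have hv0 : (0 : ℝ) < v := by exact_mod_cast (by omega : 0 < v)
  have hp0 : 0 < p := by rw [hp]; positivity
  have hvp : (v : ℝ) ^ t * p = 1 := by rw [hp]; field_simp
  have hvq : 3 ≤ (v : ℝ) ^ t * (1 - p) := by nlinarith
  have haq : (1 - p) ^ lam ≤ a := by
    rw [ha, show 1 - 2 * p = 1 - p - p by ring]
    exact pow_le_sqrt_pow_sub_pow_div hp0.le (by linarith) (by linarith) (by omega)
  have hC : (1 : ℝ) ≤ k.choose t := by exact_mod_cast Nat.choose_pos hk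
  have hB : (1 - p) ^ lam < (k.choose t : ℝ) * (v : ℝ) ^ t * a * (1 - p) := by
    have ha0 : 0 < a := haq.trans_lt' (pow_pos (by linarith) lam)
    have : a * 3 ≤ (k.choose t : ℝ) * a * ((v : ℝ) ^ t * (1 - p)) := by
      gcongr
      nlinarith
    linarith
  have hy := lt_rpow_one_div_of_pow_lt (by linarith) (by omega) hB
  rw [hx]
  exact neg_inv_exp_lt_div_exp_mul (log_neg (by linarith) (by linarith))
    (by linarith [neg_third_le_log_one_sub hp4])

/-- Let `t, k, v, lam` be positive integers with `k ≥ t ≥ 2`, `v ≥ 2`, `p = 1/v^t ≤ 1/4`,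
and `a = sqrt(((1-p)^{2λ} - p^{2λ})/(1-2p))`.  Then
`x = log(1-p) / (e * (C(k,t) v^t a (1-p))^{1/λ})` satisfies `-1/e < x < 0`. -/
theorem w_arg_is_small_enough (t k v lam : ℕ) (p a x : ℝ)
    (ht : 2 ≤ t) (hk : t ≤ k) (hv : 2 ≤ v) (hlam : 1 ≤ lam)
    (hp : p = 1 / (v : ℝ) ^ t) (hp4 : p ≤ 1 / 4)
    (ha : a = Real.sqrt (((1 - p) ^ (2 * lam) - p ^ (2 * lam)) / (1 - 2 * p)))
    (hx : x = Real.log (1 - p) /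
      (Real.exp 1 * ((k.choose t : ℝ) * (v : ℝ) ^ t * a * (1 - p)) ^ ((1 : ℝ) / lam))) :
    -1 / Real.exp 1 < x ∧ x < 0 :=
  w_arg_is_small_enough_general t k v lam p a x hk hv hlam hp hp4 ha hx
end

section
/- Probabilistic existence (SLJ criterion): let t, k, v, λ, N be positive integers with k ≥ t and v ≥ 2, and set p = 1/v^t. If C(k,t) · v^t · ∑_{i=0}^{λ-1} C(N,i) p^i (1-p)^{N-i} < 1, then a covering array CA_λ(N; t, k, v) exists. -/
open Finset

/-- `A` is a covering array `CA_lam(N; t, k, v)`: an `N × k` array over a `v`-ary alphabet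
such that for every set of `t` columns, every `t`-tuple of values appears in those columns
in at least `lam` rows. -/
def IsCA (N t k v lam : ℕ) (A : Fin N → Fin k → Fin v) : Prop :=
  ∀ s : Fin t → Fin k, Function.Injective s →
    ∀ x : Fin t → Fin v,
      lam ≤ (Finset.univ.filter (fun r : Fin N => ∀ i, A r (s i) = x i)).card


lemma card_pi_filter {n : ℕ} {α : Type*} [Fintype α] [DecidableEq α]
    (T : Fin n → Finset α) :
    (univ.filter (fun A : Fin n → α => ∀ r, A r ∈ T r)).card = ∏ r, (T r).card := by
  rw [← Fintype.card_subtype]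
  rw [Fintype.card_congr (Equiv.subtypePiEquivPi (p := fun r z => z ∈ T r))]
  simp [Fintype.card_pi]

lemma card_good_rows {t k v : ℕ} (hk : t ≤ k) (s : Fin t → Fin k)
    (hs : Function.Injective s) (x : Fin t → Fin v) :
    (univ.filter (fun row : Fin k → Fin v => ∀ i, row (s i) = x i)).card = v ^ (k - t) := by
  have hre : (univ.filter (fun row : Fin k → Fin v => ∀ i, row (s i) = x i))
      = univ.filter (fun row : Fin k → Fin v =>
          ∀ j, row j ∈ univ.filter (fun z : Fin v => ∀ i, s i = j → z = x i)) := by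
    apply filter_congr
    intro row _
    simp only [mem_filter, mem_univ, true_and, eq_iff_iff]
    constructor
    · intro hrow j i hij; subst hij; exact hrow i
    · intro hrow i; exact hrow (s i) i rfl
  rw [hre, card_pi_filter]
  have hT : ∀ j : Fin k, (univ.filter (fun z : Fin v => ∀ i, s i = j → z = x i)).card
      = if j ∈ univ.image s then 1 else v := by
    intro j
    by_cases hj : j ∈ univ.image s
    · rw [if_pos hj]
      obtain ⟨i0, -, hi0⟩ := mem_image.mp hj
      have : (univ.filter (fun z : Fin v => ∀ i, s i = j → z = x i)) = {x i0} := by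
        ext z
        simp only [mem_filter, mem_univ, true_and, mem_singleton]
        constructor
        · intro hz; exact hz i0 hi0
        · intro hz i hi
          have : i = i0 := hs (hi.trans hi0.symm)
          subst this; exact hz
      rw [this, card_singleton]
    · rw [if_neg hj]
      have : (univ.filter (fun z : Fin v => ∀ i, s i = j → z = x i)) = univ := by
        apply filter_true_of_mem
        intro z _ i hi
        exact absurd (mem_image.mpr ⟨i, mem_univ i, hi⟩) hj
      rw [this, card_univ, Fintype.card_fin]
  rw [prod_congr rfl (fun j _ => hT j)]
  rw [← prod_filter_mul_prod_filter_not univ (· ∈ univ.image s)]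
  have h1 : (univ.filter (fun j : Fin k => j ∈ univ.image s)) = univ.image s := by
    ext j; simp
  have hcards : (univ.image s).card = t := by
    rw [card_image_of_injective _ hs, card_univ, Fintype.card_fin]
  have h2 : (univ.filter (fun j : Fin k => ¬ j ∈ univ.image s)).card = k - t := by
    rw [filter_not, h1, card_sdiff_of_subset (subset_univ _), card_univ, Fintype.card_fin, hcards]
  calc (∏ j ∈ univ.filter (fun j : Fin k => j ∈ univ.image s),
          (if j ∈ univ.image s then 1 else v)) *
        ∏ j ∈ univ.filter (fun j : Fin k => ¬ j ∈ univ.image s),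
          (if j ∈ univ.image s then 1 else v)
      = (∏ _j ∈ univ.filter (fun j : Fin k => j ∈ univ.image s), 1) *
        ∏ _j ∈ univ.filter (fun j : Fin k => ¬ j ∈ univ.image s), v := by
        congr 1
        · apply prod_congr rfl; intro j hj; simp only [mem_filter] at hj; simp [hj.2]
        · apply prod_congr rfl; intro j hj; simp only [mem_filter] at hj; simp [hj.2]
    _ = v ^ (k - t) := by rw [prod_const, prod_const, h2, one_pow, one_mul]

lemma card_strictMono_tuples (t k : ℕ) :
    (univ.filter (fun s : Fin t → Fin k => StrictMono s)).card = k.choose t := by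
  have hgoal : k.choose t = (powersetCard t (univ : Finset (Fin k))).card := by
    rw [card_powersetCard, card_univ, Fintype.card_fin]
  rw [hgoal]
  refine card_bij' (fun s _ => univ.image s)
      (fun S hS => S.orderEmbOfFin (by rw [(mem_powersetCard.mp hS).2])) ?_ ?_ ?_ ?_
  · intro s hs
    simp only [mem_filter, mem_univ, true_and] at hs
    rw [mem_powersetCard]
    exact ⟨subset_univ _, by rw [card_image_of_injective _ hs.injective, card_univ,
      Fintype.card_fin]⟩
  · intro S hS
    simp only [mem_filter, mem_univ, true_and]
    exact (S.orderEmbOfFin _).strictMono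
  · intro s hs
    simp only [mem_filter, mem_univ, true_and] at hs
    exact (Finset.orderEmbOfFin_unique (f := s)
      (by rw [card_image_of_injective _ hs.injective, card_univ, Fintype.card_fin])
      (fun i => mem_image.mpr ⟨i, mem_univ i, rfl⟩) hs).symm
  · intro S hS
    ext j
    simp only [mem_image, mem_univ, true_and]
    constructor
    · rintro ⟨i, rfl⟩; exact Finset.orderEmbOfFin_mem _ _ _
    · intro hj
      have hrg := Finset.range_orderEmbOfFin S (k := t) (by rw [(mem_powersetCard.mp hS).2])
      have hj2 : j ∈ Set.range (S.orderEmbOfFin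
          (by rw [(mem_powersetCard.mp hS).2] : S.card = t)) := by
        rw [hrg]; exact hj
      obtain ⟨i, hi⟩ := hj2
      exact ⟨i, hi⟩
lemma card_level {n : ℕ} {α : Type*} [Fintype α] [DecidableEq α]
    (G : Finset α) (i : ℕ) :
    (univ.filter (fun A : Fin n → α => (univ.filter (fun r => A r ∈ G)).card = i)).card
      = n.choose i * G.card ^ i * (Fintype.card α - G.card) ^ (n - i) := by
  have hpart : (univ.filter (fun A : Fin n → α => (univ.filter (fun r => A r ∈ G)).card = i))
      = (powersetCard i (univ : Finset (Fin n))).biUnion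
          (fun S => univ.filter (fun A : Fin n → α => univ.filter (fun r => A r ∈ G) = S)) := by
    ext A
    simp only [mem_filter, mem_univ, true_and, mem_biUnion, mem_powersetCard]
    constructor
    · intro hA
      exact ⟨univ.filter (fun r => A r ∈ G), ⟨filter_subset _ _, hA⟩, rfl⟩
    · rintro ⟨S, ⟨-, hS⟩, rfl⟩; exact hS
  rw [hpart, card_biUnion]
  · have hfib : ∀ S ∈ powersetCard i (univ : Finset (Fin n)),
        (univ.filter (fun A : Fin n → α => univ.filter (fun r => A r ∈ G) = S)).card
          = G.card ^ i * (Fintype.card α - G.card) ^ (n - i) := by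
      intro S hS
      rw [mem_powersetCard] at hS
      have hcond : ∀ A : Fin n → α,
          (univ.filter (fun r => A r ∈ G) = S) ↔ ∀ r, A r ∈ (if r ∈ S then G else Gᶜ) := by
        intro A
        constructor
        · intro hEq r
          by_cases hr : r ∈ S
          · simp only [hr, if_true]
            have hrf : r ∈ univ.filter (fun r => A r ∈ G) := by rw [hEq]; exact hr
            exact (mem_filter.mp hrf).2
          · simp only [hr, if_false, mem_compl]
            intro hmem
            exact hr (hEq ▸ (mem_filter.mpr ⟨mem_univ r, hmem⟩))
        · intro hall
          ext r
          simp only [mem_filter, mem_univ, true_and]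
          have hh := hall r
          by_cases hr : r ∈ S
          · simp only [hr, if_true] at hh; exact ⟨fun _ => hr, fun _ => hh⟩
          · simp only [hr, if_false, mem_compl] at hh
            exact ⟨fun hg => absurd hg hh, fun hs => absurd hs hr⟩
      have heq2 : (univ.filter (fun A : Fin n → α => univ.filter (fun r => A r ∈ G) = S))
          = univ.filter (fun A : Fin n → α => ∀ r, A r ∈ (if r ∈ S then G else Gᶜ)) := by
        apply filter_congr; intro A _; exact (iff_of_eq (by rw [eq_iff_iff]; exact hcond A))
      rw [heq2, card_pi_filter]
      rw [← prod_filter_mul_prod_filter_not univ (· ∈ S)]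
      have h1 : (univ.filter (fun r : Fin n => r ∈ S)) = S := by ext r; simp
      have h2 : (univ.filter (fun r : Fin n => ¬ r ∈ S)).card = n - i := by
        rw [filter_not, h1, card_sdiff_of_subset (subset_univ S), card_univ, Fintype.card_fin, hS.2]
      calc (∏ r ∈ univ.filter (fun r : Fin n => r ∈ S), (if r ∈ S then G else Gᶜ).card) *
            ∏ r ∈ univ.filter (fun r : Fin n => ¬ r ∈ S), (if r ∈ S then G else Gᶜ).card
          = (∏ _r ∈ univ.filter (fun r : Fin n => r ∈ S), G.card) *
            ∏ _r ∈ univ.filter (fun r : Fin n => ¬ r ∈ S), Gᶜ.card := by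
            congr 1
            · apply prod_congr rfl; intro r hr; simp only [mem_filter] at hr; simp [hr.2]
            · apply prod_congr rfl; intro r hr; simp only [mem_filter] at hr; simp [hr.2]
        _ = G.card ^ i * (Fintype.card α - G.card) ^ (n - i) := by
            rw [prod_const, prod_const, h2, h1, hS.2, card_compl]
    rw [sum_congr rfl hfib, sum_const, card_powersetCard, card_univ, Fintype.card_fin,
      smul_eq_mul, mul_assoc]
  · intro S hS S' hS' hne
    rw [Function.onFun, Finset.disjoint_left]
    intro A hA hA'
    simp only [mem_filter, mem_univ, true_and] at hA hA'
    exact hne (hA.symm.trans hA')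

lemma term_eq (N t k v : ℕ) (hk : t ≤ k) (hv : 2 ≤ v) (i : ℕ) :
    ((N.choose i * (v ^ (k - t)) ^ i * (v ^ k - v ^ (k - t)) ^ (N - i) : ℕ) : ℝ)
      = (N.choose i : ℝ) * (1 / (v:ℝ)^t) ^ i * (1 - 1/(v:ℝ)^t) ^ (N - i) * (v:ℝ) ^ (k*N) := by
  rcases le_or_gt i N with hiN | hiN
  · obtain ⟨m, rfl⟩ : ∃ m, N = i + m := ⟨N - i, by omega⟩
    obtain ⟨d, rfl⟩ : ∃ d, k = t + d := ⟨k - t, by omega⟩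
    have hd : t + d - t = d := by omega
    have hm : i + m - i = m := by omega
    have hle : v ^ d ≤ v ^ (t + d) := Nat.pow_le_pow_right (by omega) (by omega)
    have hV : (0:ℝ) < (v:ℝ) ^ t := by positivity
    rw [hd, hm]
    push_cast [Nat.cast_sub hle]
    have h1 : (1 : ℝ) - 1/(v:ℝ)^t = ((v:ℝ)^t - 1) / (v:ℝ)^t := by field_simp
    have h2 : ((v:ℝ)^(t+d) - (v:ℝ)^d)^m = ((v:ℝ)^d)^m * ((v:ℝ)^t - 1)^m := by
      rw [← mul_pow]; congr 1; rw [pow_add]; ring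
    rw [h1, h2]
    rw [div_pow, div_pow, one_pow, show (t+d)*(i+m) = t*i + t*m + d*i + d*m by ring, pow_add, pow_add, pow_add, pow_mul, pow_mul, pow_mul, pow_mul]
    field_simp
  · rw [Nat.choose_eq_zero_of_lt hiN]
    simp

lemma card_bad {N t k v lam : ℕ} (s : Fin t → Fin k)
    (hs : Function.Injective s) (hk : t ≤ k) (x : Fin t → Fin v) :
    (univ.filter (fun A : Fin N → Fin k → Fin v =>
        (univ.filter (fun r => ∀ i, A r (s i) = x i)).card < lam)).card
      = ∑ i ∈ Finset.range lam,
          N.choose i * (v ^ (k - t)) ^ i * (v ^ k - v ^ (k - t)) ^ (N - i) := by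
  classical
  set G := univ.filter (fun row : Fin k → Fin v => ∀ i, row (s i) = x i) with hG
  have hre : ∀ A : Fin N → Fin k → Fin v,
      (univ.filter (fun r => ∀ i, A r (s i) = x i)) = univ.filter (fun r => A r ∈ G) := by
    intro A; apply filter_congr; intro r _
    simp [hG]
  have hGcard : G.card = v ^ (k - t) := card_good_rows hk s hs x
  have hpart : (univ.filter (fun A : Fin N → Fin k → Fin v =>
        (univ.filter (fun r => ∀ i, A r (s i) = x i)).card < lam))
      = (Finset.range lam).biUnion (fun i => univ.filter
          (fun A : Fin N → Fin k → Fin v => (univ.filter (fun r => A r ∈ G)).card = i)) := by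
    ext A
    simp only [mem_filter, mem_univ, true_and, mem_biUnion, Finset.mem_range, hre A]
    constructor
    · intro hA; exact ⟨_, hA, rfl⟩
    · rintro ⟨i, hi, hc⟩; omega
  rw [hpart, card_biUnion]
  · apply sum_congr rfl
    intro i _
    rw [card_level G i, hGcard]
    congr 2
    rw [Fintype.card_fun, Fintype.card_fin, Fintype.card_fin]
  · intro i hi i' hi' hne
    rw [Function.onFun, Finset.disjoint_left]
    intro A hA hA'
    simp only [mem_filter, mem_univ, true_and] at hA hA'
    exact hne (hA.symm.trans hA')

/-- Probabilistic existence (Stein–Lovász–Johnson criterion): with `p = 1/v^t`, if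
`C(k,t) · v^t · ∑_{i=0}^{λ-1} C(N,i) p^i (1-p)^{N-i} < 1`, then a `CA_lam(N; t, k, v)`
exists. -/
theorem slj_existence (N t k v lam : ℕ) (ht : 1 ≤ t) (hk : t ≤ k) (hv : 2 ≤ v)
    (hlam : 1 ≤ lam) (hN : 1 ≤ N) (p : ℝ) (hp : p = 1 / (v : ℝ) ^ t)
    (h : (k.choose t : ℝ) * (v : ℝ) ^ t *
        ∑ i ∈ Finset.range lam, (N.choose i : ℝ) * p ^ i * (1 - p) ^ (N - i) < 1) :
    ∃ A : Fin N → Fin k → Fin v, IsCA N t k v lam A := by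
  classical
  subst hp
  set badS : ℕ := ∑ i ∈ Finset.range lam,
      N.choose i * (v ^ (k - t)) ^ i * (v ^ k - v ^ (k - t)) ^ (N - i) with hbadS
  set M := univ.filter (fun s : Fin t → Fin k => StrictMono s) with hM
  set Bad : (Fin t → Fin k) → (Fin t → Fin v) → Finset (Fin N → Fin k → Fin v) :=
    fun s x => univ.filter
      (fun A => (univ.filter (fun r => ∀ i, A r (s i) = x i)).card < lam) with hBad
  set B := (M ×ˢ (univ : Finset (Fin t → Fin v))).biUnion (fun sx => Bad sx.1 sx.2) with hB
  have hBcard : B.card ≤ k.choose t * v ^ t * badS := by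
    refine le_trans (card_biUnion_le) ?_
    have hconst : ∀ sx ∈ M ×ˢ (univ : Finset (Fin t → Fin v)),
        (Bad sx.1 sx.2).card = badS := by
      rintro ⟨s, x⟩ hsx
      rw [mem_product] at hsx
      have hsM : StrictMono s := (mem_filter.mp hsx.1).2
      exact card_bad s hsM.injective hk x
    rw [sum_congr rfl hconst, sum_const, smul_eq_mul, card_product]
    rw [hM, card_strictMono_tuples, card_univ, Fintype.card_fun, Fintype.card_fin,
      Fintype.card_fin]
  have hbadScast : (badS : ℝ) = (∑ i ∈ Finset.range lam,
      (N.choose i : ℝ) * (1 / (v:ℝ)^t) ^ i * (1 - 1/(v:ℝ)^t) ^ (N - i)) * (v:ℝ) ^ (k*N) := by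
    rw [hbadS, Nat.cast_sum]
    rw [Finset.sum_congr rfl (fun i _ => term_eq N t k v hk hv i)]
    rw [← Finset.sum_mul]
  have hnat : k.choose t * v ^ t * badS < v ^ (k * N) := by
    have hlt : ((k.choose t * v ^ t * badS : ℕ) : ℝ) < ((v ^ (k * N) : ℕ) : ℝ) := by
      rw [Nat.cast_mul, Nat.cast_mul, Nat.cast_pow, hbadScast]
      calc (k.choose t : ℝ) * (v:ℝ) ^ t * ((∑ i ∈ Finset.range lam,
              (N.choose i : ℝ) * (1 / (v:ℝ)^t) ^ i * (1 - 1/(v:ℝ)^t) ^ (N - i)) * (v:ℝ) ^ (k*N))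
          = ((k.choose t : ℝ) * (v:ℝ) ^ t * ∑ i ∈ Finset.range lam,
              (N.choose i : ℝ) * (1 / (v:ℝ)^t) ^ i * (1 - 1/(v:ℝ)^t) ^ (N - i)) * (v:ℝ) ^ (k*N) := by
            ring
        _ < 1 * (v:ℝ) ^ (k*N) := by
            refine mul_lt_mul_of_pos_right h ?_
            have : (0:ℝ) < (v:ℝ) := by positivity
            positivity
        _ = ((v ^ (k * N) : ℕ) : ℝ) := by push_cast; ring
    exact_mod_cast hlt
  have hBlt : B.card < (univ : Finset (Fin N → Fin k → Fin v)).card := by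
    rw [card_univ, Fintype.card_fun, Fintype.card_fun, Fintype.card_fin, Fintype.card_fin,
      Fintype.card_fin, ← pow_mul]
    exact lt_of_le_of_lt hBcard hnat
  have hex : ∃ A : Fin N → Fin k → Fin v, A ∉ B := by
    by_contra hcon
    push_neg at hcon
    exact absurd (card_le_card (fun A _ => hcon A)) (not_le.mpr hBlt)
  obtain ⟨A, hA⟩ := hex
  refine ⟨A, ?_⟩
  intro s hs x
  set σ := Tuple.sort s with hσ
  have hmono : Monotone (s ∘ σ) := Tuple.monotone_sort s
  have hsm : StrictMono (s ∘ σ) := hmono.strictMono_of_injective (hs.comp σ.injective)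
  have hmemM : (s ∘ σ) ∈ M := mem_filter.mpr ⟨mem_univ _, hsm⟩
  have hnotbad : A ∉ Bad (s ∘ σ) (x ∘ σ) := fun hbad =>
    hA (mem_biUnion.mpr ⟨⟨s ∘ σ, x ∘ σ⟩, mem_product.mpr ⟨hmemM, mem_univ _⟩, hbad⟩)
  have hge : lam ≤ (univ.filter (fun r : Fin N =>
      ∀ i, A r ((s ∘ σ) i) = (x ∘ σ) i)).card := by
    by_contra hcon
    exact hnotbad (mem_filter.mpr ⟨mem_univ _, not_le.mp hcon⟩)
  have hfe : (univ.filter (fun r : Fin N => ∀ i, A r ((s ∘ σ) i) = (x ∘ σ) i))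
      = (univ.filter (fun r : Fin N => ∀ i, A r (s i) = x i)) := by
    apply filter_congr
    intro r _
    simp only [Function.comp_apply, eq_iff_iff]
    constructor
    · intro hh i
      have := hh (σ.symm i)
      simpa using this
    · intro hh i
      exact hh (σ i)
  rwa [hfe] at hge
end
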